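/- arXiv:2408.05519 — 4 statements merged into one kernel-verified Lean document; each statement's English description precedes it below -/
import Mathlib

section
/- For every integer n ≥ 2, the even cycle C_{2n} (the cycle graph on 2n vertices) is [n]-edge geodetic, and the minimum number of n-geodesics needed to cover all edges of C_{2n} is 2, i.e. |gen(C_{2n})| = 2. -/
open SimpleGraph

/-- A walk is a `k`-geodesic if it has length `k` and is a shortest path
between its endpoints. -/
def IsKGeodesic {V : Type*} (G : SimpleGraph V) (k : ℕ) {u v : V} (w : G.Walk u v) : Prop :=
  w.length = k ∧ G.dist u v = k

/-- A graph is `k`-edge geodetic if every edge lies on some `k`-geodesic. -/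
def IsEdgeGeodetic {V : Type*} (G : SimpleGraph V) (k : ℕ) : Prop :=
  ∀ e ∈ G.edgeSet, ∃ (u v : V) (w : G.Walk u v), IsKGeodesic G k w ∧ e ∈ w.edges

/-- A graph is `[k]`-edge geodetic if it is `k`-edge geodetic but not `(k+1)`-edge geodetic. -/
def IsMaxEdgeGeodetic {V : Type*} (G : SimpleGraph V) (k : ℕ) : Prop :=
  IsEdgeGeodetic G k ∧ ¬ IsEdgeGeodetic G (k + 1)

/-- `genNum G k` is the minimum number of `k`-geodesics of `G` whose edges
together cover all edges of `G`. -/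
noncomputable def genNum {V : Type*} (G : SimpleGraph V) (k : ℕ) : ℕ :=
  sInf {r : ℕ | ∃ f : Fin r → Σ u : V, Σ v : V, G.Walk u v,
    (∀ i, IsKGeodesic G k (f i).2.2) ∧
    ∀ e ∈ G.edgeSet, ∃ i, e ∈ (f i).2.2.edges}

/-!
A walk of length `ℓ` from `u` to `v` in `C_m` takes `a` steps forward and `b` backward with
`a + b = ℓ` and `a - b ≡ v - u (mod m)`, so the distance from `u` to `v` is the smaller of the
two residues of `±(v - u)`. In `C_{2n}` all distances are therefore at most `n`, which rules out
`(n + 1)`-geodesics, and antipodal vertices are at distance exactly `n`, so the two arcs of length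
`n` starting at `0` and at `n` are `n`-geodesics covering the cycle. Since an `n`-geodesic has only
`n` edges, fewer than two of them cannot cover the `2n` edges.
-/

open Finset Fin.NatCast Fin.CommRing

def IsGeodesicCover {V : Type*} (G : SimpleGraph V) (k : ℕ) {r : ℕ}
    (f : Fin r → Σ u : V, Σ v : V, G.Walk u v) : Prop :=
  (∀ i, IsKGeodesic G k (f i).2.2) ∧ ∀ e ∈ G.edgeSet, ∃ i, e ∈ (f i).2.2.edges

section Cover

variable {V : Type*} {G : SimpleGraph V} {k r : ℕ} {f : Fin r → Σ u : V, Σ v : V, G.Walk u v}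

theorem IsGeodesicCover.isEdgeGeodetic (hf : IsGeodesicCover G k f) : IsEdgeGeodetic G k := by
  intro e he
  obtain ⟨i, hi⟩ := hf.2 e he
  exact ⟨_, _, (f i).2.2, hf.1 i, hi⟩

theorem genNum_le_of_isGeodesicCover (hf : IsGeodesicCover G k f) : genNum G k ≤ r :=
  Nat.sInf_le ⟨f, hf⟩

theorem card_edgeFinset_le_mul_of_isGeodesicCover [Fintype G.edgeSet]
    (hf : IsGeodesicCover G k f) : #G.edgeFinset ≤ r * k := by
  classical
  calc #G.edgeFinset ≤ #(univ.biUnion fun i => (f i).2.2.edges.toFinset) :=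
        card_le_card fun e he => by simpa using hf.2 e (mem_edgeFinset.mp he)
    _ ≤ ∑ i, #(f i).2.2.edges.toFinset := card_biUnion_le
    _ ≤ ∑ _i : Fin r, k := sum_le_sum fun i _ =>
        (List.toFinset_card_le _).trans ((f i).2.2.length_edges.trans (hf.1 i).1).le
    _ = r * k := by simp

theorem card_edgeFinset_le_genNum_mul [Fintype G.edgeSet] (hf : IsGeodesicCover G k f) :
    #G.edgeFinset ≤ genNum G k * k := by
  obtain ⟨g, hg⟩ : genNum G k ∈ {r : ℕ | ∃ g, IsGeodesicCover G k g} :=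
    Nat.sInf_mem ⟨r, f, hf⟩
  exact card_edgeFinset_le_mul_of_isGeodesicCover hg

end Cover

theorem not_isEdgeGeodetic_of_dist_lt {V : Type*} {G : SimpleGraph V} {k : ℕ}
    (hG : G.edgeSet.Nonempty) (hk : ∀ u v, G.dist u v < k) : ¬IsEdgeGeodetic G k := by
  intro h
  obtain ⟨e, he⟩ := hG
  obtain ⟨u, v, _, ⟨-, hdist⟩, -⟩ := h e he
  exact (hk u v).ne hdist

namespace Fin

theorem val_add_val_neg_le {m : ℕ} (c : Fin m) : c.val + (-c).val ≤ m := by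
  rw [Fin.val_neg']
  rcases Nat.eq_zero_or_pos c.val with h | h
  · simp [h]
  · have := Nat.mod_le (m - c.val) m
    omega

theorem min_val_val_neg_le_add {m : ℕ} [NeZero m] (a b : ℕ) :
    min ((a : Fin m) - b).val (-((a : Fin m) - b)).val ≤ a + b := by
  rcases le_total b a with hba | hab
  · rw [← Nat.cast_sub hba, val_natCast]
    exact (min_le_left _ _).trans ((Nat.mod_le _ _).trans (by omega))
  · rw [neg_sub, ← Nat.cast_sub hab, val_natCast]
    exact (min_le_right _ _).trans ((Nat.mod_le _ _).trans (by omega))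

end Fin

namespace SimpleGraph

variable {m : ℕ} [NeZero m]

theorem cycleGraph_adj_iff (hm : 1 < m) {u v : Fin m} :
    (cycleGraph m).Adj u v ↔ u = v + 1 ∨ v = u + 1 := by
  have h1 : ∀ c : Fin m, c.val = 1 ↔ c = 1 := fun c => by
    rw [Fin.ext_iff, Fin.val_one', Nat.mod_eq_of_lt hm]
  rw [cycleGraph_adj', h1, h1, sub_eq_iff_eq_add, sub_eq_iff_eq_add, add_comm 1, add_comm 1]

theorem cycleGraph_adj_add_one (hm : 1 < m) (u : Fin m) : (cycleGraph m).Adj u (u + 1) :=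
  (cycleGraph_adj_iff hm).mpr (Or.inr rfl)

theorem cycleGraph_mem_edgeSet_iff (hm : 1 < m) {e : Sym2 (Fin m)} :
    e ∈ (cycleGraph m).edgeSet ↔ ∃ v, e = s(v, v + 1) := by
  induction e with
  | _ a b =>
    rw [mem_edgeSet, cycleGraph_adj_iff hm]
    constructor
    · rintro (rfl | rfl)
      exacts [⟨b, Sym2.eq_swap⟩, ⟨a, rfl⟩]
    · rintro ⟨v, hv⟩
      rcases Sym2.eq_iff.mp hv with ⟨rfl, rfl⟩ | ⟨rfl, rfl⟩
      exacts [Or.inr rfl, Or.inl rfl]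

theorem cycleGraph_card_edgeFinset (hm : 2 < m) : #(cycleGraph m).edgeFinset = m := by
  have hinj : Function.Injective fun v : Fin m => s(v, v + 1) := by
    intro v w hvw
    rcases Sym2.eq_iff.mp hvw with ⟨h, -⟩ | ⟨hvw, hwv⟩
    · exact h
    · have h2 : ((2 : ℕ) : Fin m) = 0 := by push_cast; linear_combination hwv - hvw
      exact absurd (Nat.le_of_dvd two_pos (Fin.natCast_eq_zero.mp h2)) (by omega)
  have himage : (cycleGraph m).edgeFinset = univ.image fun v : Fin m => s(v, v + 1) := by
    ext e
    simp [cycleGraph_mem_edgeSet_iff (by omega : 1 < m), eq_comm]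
  rw [himage, card_image_of_injective _ hinj, card_univ, Fintype.card_fin]

theorem cycleGraph_exists_natCast_sub_eq (hm : 1 < m) {u v : Fin m}
    (p : (cycleGraph m).Walk u v) :
    ∃ a b : ℕ, a + b = p.length ∧ (a : Fin m) - b = v - u := by
  induction p with
  | nil => exact ⟨0, 0, rfl, by simp⟩
  | @cons u x v h p ih =>
    obtain ⟨a, b, hlen, hsub⟩ := ih
    rcases (cycleGraph_adj_iff hm).mp h with rfl | rfl
    · exact ⟨a, b + 1, by rw [Walk.length_cons]; omega, by push_cast; linear_combination hsub⟩
    · exact ⟨a + 1, b, by rw [Walk.length_cons]; omega, by push_cast; linear_combination hsub⟩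

theorem cycleGraph_min_le_length (hm : 1 < m) {u v : Fin m} (p : (cycleGraph m).Walk u v) :
    min (v - u).val (u - v).val ≤ p.length := by
  obtain ⟨a, b, hlen, hsub⟩ := cycleGraph_exists_natCast_sub_eq hm p
  rw [← neg_sub v u, ← hsub, ← hlen]
  exact Fin.min_val_val_neg_le_add a b

def cycleGraph.arc (hm : 1 < m) (u : Fin m) : (ℓ : ℕ) → (cycleGraph m).Walk u (u + ℓ)
  | 0 => Walk.nil.copy rfl (by simp)
  | ℓ + 1 =>
    (arc hm u ℓ).concat (cycleGraph_adj_add_one hm _) |>.copy rfl (by push_cast; ring)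

theorem cycleGraph.length_arc (hm : 1 < m) (u : Fin m) (ℓ : ℕ) : (arc hm u ℓ).length = ℓ := by
  induction ℓ with
  | zero => simp [arc]
  | succ ℓ ih => simp [arc, ih]

theorem cycleGraph.mem_edges_arc (hm : 1 < m) (u : Fin m) {ℓ i : ℕ} (hi : i < ℓ) :
    s(u + i, u + i + 1) ∈ (arc hm u ℓ).edges := by
  induction ℓ with
  | zero => omega
  | succ ℓ ih =>
    simp only [arc, Walk.edges_copy, Walk.edges_concat, List.concat_eq_append, List.mem_append,
      List.mem_singleton]
    rcases (Nat.lt_succ_iff_lt_or_eq.mp hi) with hi | rfl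
    exacts [Or.inl (ih hi), Or.inr rfl]

theorem cycleGraph.mem_edges_arc_of_val_sub_lt (hm : 1 < m) {u v : Fin m} {ℓ : ℕ}
    (hv : (v - u).val < ℓ) : s(v, v + 1) ∈ (arc hm u ℓ).edges := by
  simpa using mem_edges_arc hm u hv

theorem cycleGraph_dist_le_val_sub (hm : 1 < m) (u v : Fin m) :
    (cycleGraph m).dist u v ≤ (v - u).val :=
  (dist_le ((cycleGraph.arc hm u (v - u).val).copy rfl (by simp))).trans_eq
    (by simp [cycleGraph.length_arc])

theorem cycleGraph_dist_eq_min (hm : 1 < m) (u v : Fin m) :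
    (cycleGraph m).dist u v = min (v - u).val (u - v).val := by
  refine le_antisymm (le_min (cycleGraph_dist_le_val_sub hm u v) ?_) ?_
  · exact dist_comm.trans_le (cycleGraph_dist_le_val_sub hm v u)
  · obtain ⟨p, hp⟩ := (cycleGraph_preconnected u v).exists_walk_length_eq_dist
    exact hp ▸ cycleGraph_min_le_length hm p

theorem cycleGraph_two_mul_dist_le (hm : 1 < m) (u v : Fin m) :
    2 * (cycleGraph m).dist u v ≤ m := by
  have := Fin.val_add_val_neg_le (v - u)
  rw [neg_sub] at this
  rw [cycleGraph_dist_eq_min hm]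
  omega

theorem cycleGraph_dist_add_half {n : ℕ} [NeZero (2 * n)] (hn : 0 < n) (u : Fin (2 * n)) :
    (cycleGraph (2 * n)).dist u (u + n) = n := by
  have hval : ((n : Fin (2 * n)) : ℕ) = n := by rw [Fin.val_natCast, Nat.mod_eq_of_lt (by omega)]
  have hneg : -(n : Fin (2 * n)) = n := by
    rw [neg_eq_iff_add_eq_zero, ← Nat.cast_add, ← two_mul, Fin.natCast_self]
  rw [cycleGraph_dist_eq_min (by omega), add_sub_cancel_left, sub_add_cancel_left, hneg, hval,
    min_self]

theorem cycleGraph.isKGeodesic_arc_half {n : ℕ} [NeZero (2 * n)] (hn : 0 < n) (u : Fin (2 * n)) :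
    IsKGeodesic (cycleGraph (2 * n)) n (arc (by omega : 1 < 2 * n) u n) :=
  ⟨length_arc _ u n, cycleGraph_dist_add_half hn u⟩

def cycleGraph.halfArcs {n : ℕ} [NeZero (2 * n)] (hn : 0 < n) :
    Fin 2 → Σ u : Fin (2 * n), Σ v : Fin (2 * n), (cycleGraph (2 * n)).Walk u v :=
  ![⟨0, _, arc (by omega : 1 < 2 * n) 0 n⟩, ⟨n, _, arc (by omega : 1 < 2 * n) n n⟩]

theorem cycleGraph.isGeodesicCover_halfArcs {n : ℕ} [NeZero (2 * n)] (hn : 0 < n) :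
    IsGeodesicCover (cycleGraph (2 * n)) n (halfArcs hn) := by
  refine ⟨Fin.forall_fin_two.mpr ⟨isKGeodesic_arc_half hn 0, isKGeodesic_arc_half hn _⟩,
    fun e he => ?_⟩
  obtain ⟨v, rfl⟩ := (cycleGraph_mem_edgeSet_iff (by omega)).mp he
  by_cases hv : v.val < n
  · exact ⟨0, mem_edges_arc_of_val_sub_lt (u := 0) _ (by simpa using hv)⟩
  · refine ⟨1, show s(v, v + 1) ∈ (arc _ (n : Fin (2 * n)) n).edges from
      mem_edges_arc_of_val_sub_lt _ ?_⟩
    have hle : (n : Fin (2 * n)) ≤ v := by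
      rw [Fin.le_iff_val_le_val, Fin.val_natCast, Nat.mod_eq_of_lt (by omega)]; omega
    rw [Fin.coe_sub_iff_le.mpr hle, Fin.val_natCast, Nat.mod_eq_of_lt (by omega)]
    omega

end SimpleGraph

/-- For every integer `n ≥ 2`, the even cycle `C_{2n}` is `[n]`-edge geodetic and the
minimum number of `n`-geodesics needed to cover all its edges is `2`. -/
theorem cycle_even_maxEdgeGeodetic (n : ℕ) (hn : 2 ≤ n) :
    IsMaxEdgeGeodetic (cycleGraph (2 * n)) n ∧ genNum (cycleGraph (2 * n)) n = 2 := by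
  have : NeZero (2 * n) := ⟨by omega⟩
  have hcover := cycleGraph.isGeodesicCover_halfArcs (by omega : 0 < n)
  refine ⟨⟨hcover.isEdgeGeodetic, not_isEdgeGeodetic_of_dist_lt ?_ fun u v => ?_⟩, ?_⟩
  · exact ⟨s(0, 0 + 1), cycleGraph_adj_add_one (by omega : 1 < 2 * n) 0⟩
  · have := cycleGraph_two_mul_dist_le (by omega) u v
    omega
  · refine le_antisymm (genNum_le_of_isGeodesicCover hcover) ?_
    have := card_edgeFinset_le_genNum_mul hcover
    rw [cycleGraph_card_edgeFinset (by omega)] at this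
    exact Nat.le_of_mul_le_mul_right this (by omega)
end

section
/- For positive integers n, m with not both n = 1 and m = 1, the minimum number of 2-geodesics needed to cover all edges of the complete bipartite graph K_{n,m} equals ⌈nm/2⌉, i.e. |gen(K_{n,m})| = ⌈nm/2⌉. -/
open SimpleGraph

section Aux

private lemma ceil_half_nat (k : ℕ) : ⌈(k:ℚ)/2⌉₊ = (k+1)/2 := by
  rcases Nat.eq_zero_or_pos k with rfl | hk
  · simp
  · set c := (k+1)/2 with hc
    have hc1 : k ≤ 2 * c := by omega
    have hc2 : 2 * c ≤ k + 1 := by omega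
    rw [Nat.ceil_eq_iff (by omega)]
    constructor
    · have h : (c - 1) * 2 < k := by omega
      rw [lt_div_iff₀ (by norm_num : (0:ℚ) < 2)]
      exact_mod_cast h
    · rw [div_le_iff₀ (by norm_num : (0:ℚ) < 2)]
      have : k ≤ c * 2 := by omega
      exact_mod_cast this

private lemma dist_eq_two {V : Type*} {G : SimpleGraph V} {u w v : V}
    (h1 : G.Adj u w) (h2 : G.Adj w v) (hne : u ≠ v) (hna : ¬ G.Adj u v) :
    G.dist u v = 2 := by
  have hle : G.dist u v ≤ 2 := by
    have := G.dist_le (Walk.cons h1 (Walk.cons h2 Walk.nil))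
    simpa using this
  have h0 : G.dist u v ≠ 0 := by
    rw [SimpleGraph.dist_ne_zero_iff_ne_and_reachable]
    exact ⟨hne, ⟨Walk.cons h1 (Walk.cons h2 Walk.nil)⟩⟩
  have h1' : G.dist u v ≠ 1 := fun hd => hna (dist_eq_one_iff_adj.mp hd)
  omega

private lemma mem_list_two {α : Type*} {l : List α} (h : l.length = 2) {x : α} (hx : x ∈ l) :
    x = l.get ⟨0, by omega⟩ ∨ x = l.get ⟨1, by omega⟩ := by
  match l, h with
  | [a, b], _ => simpa using hx

private lemma div_mod_pair (m q s : ℕ) (hm : 0 < m) (hs : s < m) :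
    (q * m + s) / m = q ∧ (q * m + s) % m = s := by
  constructor
  · rw [Nat.add_comm, Nat.add_mul_div_right _ _ hm, Nat.div_eq_of_lt hs, Nat.zero_add]
  · rw [Nat.add_comm, Nat.add_mul_mod_self_right, Nat.mod_eq_of_lt hs]

/-- row of the snake enumeration -/
private def rowN (m t : ℕ) : ℕ := t / m

/-- column of the snake enumeration -/
private def colN (m t : ℕ) : ℕ :=
  if (t / m) % 2 = 0 then t % m else m - 1 - t % m

private lemma colN_lt (m t : ℕ) (hm : 1 ≤ m) : colN m t < m := by
  have := Nat.mod_lt t (show 0 < m by omega)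
  unfold colN; split <;> omega

private lemma rowN_lt (n m t : ℕ) (hm : 1 ≤ m) (ht : t < n * m) : rowN m t < n := by
  unfold rowN
  rw [Nat.div_lt_iff_lt_mul (by omega)]
  omega

private lemma snake_step (m t : ℕ) (hm : 1 ≤ m) :
    (rowN m (t+1) = rowN m t ∧ colN m (t+1) ≠ colN m t) ∨
    (rowN m (t+1) = rowN m t + 1 ∧ colN m (t+1) = colN m t) := by
  have hmod := Nat.mod_lt t (show 0 < m by omega)
  have hdm := Nat.div_add_mod t m
  have hcomm : t / m * m = m * (t / m) := Nat.mul_comm _ _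
  rcases Nat.lt_or_ge (t % m + 1) m with hs | hs
  · -- same row
    left
    obtain ⟨hD, hM⟩ := div_mod_pair m (t / m) (t % m + 1) (by omega) hs
    have ht1 : t + 1 = t / m * m + (t % m + 1) := by omega
    have hdiv : (t+1) / m = t / m := by rw [ht1, hD]
    have hmod2 : (t+1) % m = t % m + 1 := by rw [ht1, hM]
    refine ⟨by simpa [rowN] using hdiv, ?_⟩
    unfold colN
    rw [hdiv, hmod2]
    split <;> omega
  · -- next row
    right
    have hsm : t % m = m - 1 := by omega
    have ht1 : t + 1 = (t / m + 1) * m := by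
      have h3 : (t / m + 1) * m = t / m * m + m := by ring
      omega
    have hdiv : (t+1) / m = t / m + 1 := by
      rw [ht1, Nat.mul_div_cancel _ (show 0 < m by omega)]
    have hmod2 : (t+1) % m = 0 := by
      rw [ht1, Nat.mul_mod_left]
    refine ⟨by simpa [rowN] using hdiv, ?_⟩
    unfold colN
    rw [hdiv, hmod2, hsm]
    rcases Nat.even_or_odd (t / m) with he | ho
    · have h2 : t / m % 2 = 0 := Nat.even_iff.mp he
      simp [h2, Nat.add_mod]
    · have h2 : t / m % 2 = 1 := Nat.odd_iff.mp ho
      simp [h2, Nat.add_mod]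

private lemma snake_surj (n m : ℕ) (hm : 1 ≤ m) (i j : ℕ) (hi : i < n) (hj : j < m) :
    ∃ t < n * m, rowN m t = i ∧ colN m t = j := by
  set o := if i % 2 = 0 then j else m - 1 - j with ho
  have holt : o < m := by rw [ho]; split <;> omega
  obtain ⟨hD, hM⟩ := div_mod_pair m i o (by omega) holt
  refine ⟨i * m + o, by nlinarith, ?_, ?_⟩
  · simpa [rowN] using hD
  · unfold colN
    rw [hD, hM, ho]
    split <;> omega

end Aux

/-- For positive integers `n, m` not both equal to `1`, the minimum number of
`2`-geodesics needed to cover all edges of `K_{n,m}` is `⌈nm / 2⌉`. -/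
theorem completeBipartite_genNum (n m : ℕ) (hn : 1 ≤ n) (hm : 1 ≤ m)
    (h : ¬(n = 1 ∧ m = 1)) :
    genNum (completeBipartiteGraph (Fin n) (Fin m)) 2 = ⌈(n * m : ℚ) / 2⌉₊ := by
  have hn0 : 0 < n := hn
  have hm0 : 0 < m := hm
  set B := completeBipartiteGraph (Fin n) (Fin m) with hB
  set N := n * m with hN
  have hN2 : 2 ≤ N := by
    have h2 : 2 ≤ n ∨ 2 ≤ m := by omega
    rw [hN]
    rcases h2 with h2 | h2 <;> nlinarith
  -- the t-th edge in the snake enumeration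
  set E : ℕ → Sym2 (Fin n ⊕ Fin m) := fun t =>
    s(Sum.inl ⟨rowN m t % n, Nat.mod_lt _ hn0⟩, Sum.inr ⟨colN m t % m, Nat.mod_lt _ hm0⟩)
    with hE
  -- a 2-geodesic covering edges t and t+1
  have pairGeo : ∀ t, t + 1 < N → ∃ w : Σ u : Fin n ⊕ Fin m, Σ v : Fin n ⊕ Fin m, B.Walk u v,
      IsKGeodesic B 2 w.2.2 ∧ E t ∈ w.2.2.edges ∧ E (t+1) ∈ w.2.2.edges := by
    intro t ht
    have hr1 : rowN m t < n := rowN_lt n m t hm (by omega)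
    have hr2 : rowN m (t+1) < n := rowN_lt n m (t+1) hm (by omega)
    have hc1 : colN m t < m := colN_lt m t hm
    have hc2 : colN m (t+1) < m := colN_lt m (t+1) hm
    rcases snake_step m t hm with ⟨hrow, hcol⟩ | ⟨hrow, hcol⟩
    · -- shared left vertex
      set R : Fin n := ⟨rowN m t % n, Nat.mod_lt _ hn0⟩ with hR
      set C1 : Fin m := ⟨colN m t % m, Nat.mod_lt _ hm0⟩ with hC1
      set C2 : Fin m := ⟨colN m (t+1) % m, Nat.mod_lt _ hm0⟩ with hC2
      have hCne : C1 ≠ C2 := by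
        simp only [hC1, hC2, ne_eq, Fin.mk.injEq]
        rw [Nat.mod_eq_of_lt hc1, Nat.mod_eq_of_lt hc2]
        exact fun hc => hcol hc.symm
      have h1 : B.Adj (Sum.inr C1) (Sum.inl R) := by simp [hB]
      have h2 : B.Adj (Sum.inl R) (Sum.inr C2) := by simp [hB]
      have hE1 : E t = s(Sum.inl R, Sum.inr C1) := rfl
      have hE2 : E (t+1) = s(Sum.inl R, Sum.inr C2) := by
        simp only [hE, hR, hC2]
        rw [hrow]
      refine ⟨⟨_, _, Walk.cons h1 (Walk.cons h2 Walk.nil)⟩, ⟨by simp, ?_⟩, ?_, ?_⟩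
      · exact dist_eq_two h1 h2 (by simp [hCne]) (by simp [hB])
      · rw [hE1]
        simp [Sym2.eq_swap]
      · rw [hE2]
        simp
    · -- shared right vertex
      set R1 : Fin n := ⟨rowN m t % n, Nat.mod_lt _ hn0⟩ with hR1
      set R2 : Fin n := ⟨rowN m (t+1) % n, Nat.mod_lt _ hn0⟩ with hR2
      set C : Fin m := ⟨colN m t % m, Nat.mod_lt _ hm0⟩ with hC
      have hRne : R1 ≠ R2 := by
        simp only [hR1, hR2, ne_eq, Fin.mk.injEq]
        rw [Nat.mod_eq_of_lt hr1, Nat.mod_eq_of_lt hr2]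
        omega
      have h1 : B.Adj (Sum.inl R1) (Sum.inr C) := by simp [hB]
      have h2 : B.Adj (Sum.inr C) (Sum.inl R2) := by simp [hB]
      have hE1 : E t = s(Sum.inl R1, Sum.inr C) := rfl
      have hE2 : E (t+1) = s(Sum.inl R2, Sum.inr C) := by
        simp only [hE, hR2, hC]
        rw [hcol]
      refine ⟨⟨_, _, Walk.cons h1 (Walk.cons h2 Walk.nil)⟩, ⟨by simp, ?_⟩, ?_, ?_⟩
      · exact dist_eq_two h1 h2 (by simp [hRne]) (by simp [hB])
      · rw [hE1]
        simp
      · rw [hE2]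
        simp [Sym2.eq_swap]
  -- every edge of B is E t for some t < N
  have edgeRep : ∀ e ∈ B.edgeSet, ∃ t < N, E t = e := by
    intro e he
    induction e using Sym2.ind with
    | _ a b =>
      rw [SimpleGraph.mem_edgeSet] at he
      have key : ∀ (i : Fin n) (j : Fin m), ∃ t < N, E t = s(Sum.inl i, Sum.inr j) := by
        intro i j
        obtain ⟨t, htN, hrow, hcol⟩ := snake_surj n m hm i.1 j.1 i.isLt j.isLt
        refine ⟨t, htN, ?_⟩
        have h1 : (⟨rowN m t % n, Nat.mod_lt _ hn0⟩ : Fin n) = i := by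
          apply Fin.ext
          show rowN m t % n = i.val
          rw [hrow]
          exact Nat.mod_eq_of_lt i.isLt
        have h2 : (⟨colN m t % m, Nat.mod_lt _ hm0⟩ : Fin m) = j := by
          apply Fin.ext
          show colN m t % m = j.val
          rw [hcol]
          exact Nat.mod_eq_of_lt j.isLt
        simp only [hE]
        rw [h1, h2]
      rcases a with i | j <;> rcases b with i' | j'
      · simp [hB] at he
      · exact key i j'
      · obtain ⟨t, ht, hEt⟩ := key i' j
        exact ⟨t, ht, by rw [hEt, Sym2.eq_swap]⟩
      · simp [hB] at he
  -- the covering number set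
  set S : Set ℕ := {r : ℕ | ∃ f : Fin r → Σ u : Fin n ⊕ Fin m, Σ v : Fin n ⊕ Fin m, B.Walk u v,
    (∀ i, IsKGeodesic B 2 (f i).2.2) ∧
    ∀ e ∈ B.edgeSet, ∃ i, e ∈ (f i).2.2.edges} with hS
  have hgen : genNum B 2 = sInf S := rfl
  -- membership of (N+1)/2
  have hmem : (N + 1) / 2 ∈ S := by
    have key : ∀ k : ℕ, ∃ w : Σ u : Fin n ⊕ Fin m, Σ v : Fin n ⊕ Fin m, B.Walk u v,
        IsKGeodesic B 2 w.2.2 ∧ E (min (2*k) (N-2)) ∈ w.2.2.edges ∧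
        E (min (2*k) (N-2) + 1) ∈ w.2.2.edges := by
      intro k
      exact pairGeo _ (by omega)
    choose f0 hf1 hf2 hf3 using key
    refine ⟨fun i => f0 i.1, fun i => hf1 i.1, ?_⟩
    intro e he
    obtain ⟨t, htN, hEt⟩ := edgeRep e he
    refine ⟨⟨t/2, by omega⟩, ?_⟩
    show e ∈ (f0 (t/2)).2.2.edges
    have hcase : t = min (2*(t/2)) (N-2) ∨ t = min (2*(t/2)) (N-2) + 1 := by omega
    rcases hcase with hc | hc
    · have h5 := hf2 (t/2)
      rwa [← hc, hEt] at h5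
    · have h5 := hf3 (t/2)
      rwa [← hc, hEt] at h5
  -- lower bound
  have hlow : ∀ r ∈ S, N ≤ 2 * r := by
    rintro r ⟨f, hgeo, hcov⟩
    have hlen : ∀ i : Fin r, ((f i).2.2).edges.length = 2 := fun i => by
      rw [Walk.length_edges, (hgeo i).1]
    have key : ∀ p : Fin n × Fin m, ∃ i : Fin r, s(Sum.inl p.1, Sum.inr p.2) ∈ (f i).2.2.edges :=
      fun p => hcov _ (by simp [hB])
    choose idx hidx using key
    let g : Fin n × Fin m → Fin r × Fin 2 := fun p =>
      (idx p, if s(Sum.inl p.1, Sum.inr p.2) = ((f (idx p)).2.2).edges.get ⟨0, by rw [hlen]; omega⟩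
        then 0 else 1)
    have hginj : Function.Injective g := by
      intro p q hpq
      rw [Prod.ext_iff] at hpq
      obtain ⟨hi, hb⟩ := hpq
      simp only [g] at hi hb
      have hep := hidx p
      have heq := hidx q
      rw [hi] at hep hb
      have hLlen : ((f (idx q)).2.2).edges.length = 2 := hlen _
      have e1e2 : s(Sum.inl p.1, Sum.inr p.2) = (s(Sum.inl q.1, Sum.inr q.2) :
          Sym2 (Fin n ⊕ Fin m)) := by
        by_cases hP : s(Sum.inl p.1, Sum.inr p.2) =
            ((f (idx q)).2.2).edges.get ⟨0, by rw [hLlen]; omega⟩ <;>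
          by_cases hQ : (s(Sum.inl q.1, Sum.inr q.2) : Sym2 (Fin n ⊕ Fin m)) =
            ((f (idx q)).2.2).edges.get ⟨0, by rw [hLlen]; omega⟩
        · rw [hP, hQ]
        · rw [if_pos hP, if_neg hQ] at hb
          exact absurd hb (by decide)
        · rw [if_neg hP, if_pos hQ] at hb
          exact absurd hb (by decide)
        · rcases mem_list_two hLlen hep with h1 | h1
          · exact absurd h1 hP
          · rcases mem_list_two hLlen heq with h2 | h2
            · exact absurd h2 hQ
            · rw [h1, h2]
      have : p.1 = q.1 ∧ p.2 = q.2 := by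
        simpa [Sym2.eq_iff] using e1e2
      exact Prod.ext this.1 this.2
    have hcard := Fintype.card_le_of_injective g hginj
    simp only [Fintype.card_prod, Fintype.card_fin] at hcard
    omega
  have hceil : ⌈(n * m : ℚ) / 2⌉₊ = (N + 1) / 2 := by
    rw [hN, ← Nat.cast_mul]
    exact ceil_half_nat (n * m)
  rw [hgen, hceil]
  apply le_antisymm
  · exact Nat.sInf_le hmem
  · have hmem' : sInf S ∈ S := Nat.sInf_mem ⟨_, hmem⟩
    have := hlow _ hmem'
    omega
end

section
/- Let T be a finite tree with at least one edge, let S_T be the set of pendant (degree-one) vertices of T, and let k = min over v ∈ S_T of the eccentricity e(v). Then T is [k]-edge geodetic, i.e. every edge of T lies on some geodesic of length k, and some edge of T lies on no geodesic of length k+1. -/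
open SimpleGraph

/-- Eccentricity of a vertex: the maximum distance from it to any vertex. -/
noncomputable def eccent {V : Type*} [Fintype V] (G : SimpleGraph V) (v : V) : ℕ :=
  Finset.univ.sup (G.dist v)

/-!
For an edge `uv`, take a longest path `p` leaving `u` away from `v` and a longest path `q` leaving
`v` away from `u`. Their far ends are leaves, and `p⁻¹ · uv · q` is a path, hence a geodesic of
the tree, of length `|p| + 1 + |q|`. If `|p| ≤ |q|`, every vertex is within `|p| + 1 + |q|` of the
end of `p`, so this length is at least `k`, and trimming end edges yields a `k`-geodesic through
`uv`. Conversely, a leaf `x` with `e(x) = k` can only be an end of a geodesic, so its pendant edge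
lies on no geodesic longer than `k`.
-/

namespace SimpleGraph

variable {V : Type*} {G : SimpleGraph V}

lemma Walk.IsPath.append_of_disjoint {u v w : V} {p : G.Walk u v} {q : G.Walk v w}
    (hp : p.IsPath) (hq : q.IsPath) (h : p.support.Disjoint q.support.tail) :
    (p.append q).IsPath := by
  rw [Walk.isPath_def, Walk.support_append]
  exact hp.support_nodup.append hq.support_nodup.tail h

lemma Walk.dist_add_dist_of_mem_support {u v w : V} {p : G.Walk u v}
    (hp : p.length = G.dist u v) (hw : w ∈ p.support) :
    G.dist u w + G.dist w v = G.dist u v := by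
  classical
  have h₁ := dist_le (p.takeUntil w hw)
  have h₂ := dist_le (p.dropUntil w hw)
  have hsplit := congrArg Walk.length (p.take_spec hw)
  rw [Walk.length_append] at hsplit
  have := (p.takeUntil w hw).reachable.dist_triangle_left v
  omega

lemma Walk.length_tail_eq_dist {u v : V} {p : G.Walk u v} (hp : p.length = G.dist u v) :
    p.tail.length = G.dist p.snd v :=
  length_eq_dist_of_subwalk hp (Walk.isSubwalk_rfl p).tail

lemma exists_isKGeodesic_mem_edges_of_le {k : ℕ} (hk : 1 ≤ k) {e : Sym2 V} {x y : V}
    (w : G.Walk x y) (hw : w.length = G.dist x y) (hkw : k ≤ w.length) (he : e ∈ w.edges) :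
    ∃ (x' y' : V) (w' : G.Walk x' y'), IsKGeodesic G k w' ∧ e ∈ w'.edges := by
  obtain ⟨n, hn⟩ := Nat.exists_eq_add_of_le hkw
  induction n generalizing x y with
  | zero => exact ⟨_, _, w, ⟨hn, hw ▸ hn⟩, he⟩
  | succ n ih =>
    have hnil : ¬ w.Nil := by rw [← Walk.length_eq_zero_iff]; omega
    have htail := w.length_tail_add_one hnil
    -- drop an end edge of `w` other than `e`: the first one if possible, else the last one
    by_cases het : e ∈ w.tail.edges
    · exact ih w.tail (Walk.length_tail_eq_dist hw) (by omega) het (by omega)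
    have hrev : w.reverse.length = G.dist y x := by rw [Walk.length_reverse, hw, dist_comm]
    have hrnil : ¬ w.reverse.Nil := by rw [← Walk.length_eq_zero_iff, Walk.length_reverse]; omega
    have hrtail := w.reverse.length_tail_add_one hrnil
    rw [Walk.length_reverse] at hrtail
    refine ih w.reverse.tail (Walk.length_tail_eq_dist hrev) (by omega) ?_ (by omega)
    have hedges : w.edges = s(x, w.snd) :: w.tail.edges := by
      conv_lhs => rw [← w.cons_tail_eq hnil]
      rfl
    have htne : w.tail.edges ≠ [] := by
      rw [ne_eq, List.eq_nil_iff_length_eq_zero, Walk.length_edges]; omega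
    rw [hedges, List.mem_cons] at he
    rw [Walk.edges_tail, Walk.edges_reverse, hedges, List.reverse_cons,
      List.tail_append_of_ne_nil (by simpa using htne), he.resolve_right het]
    exact List.mem_append_right _ (List.mem_singleton_self _)

lemma dist_lt_dist_of_degree_eq_one {p u x : V} [Fintype (G.neighborSet p)]
    (hp : G.degree p = 1) (hpu : G.Adj p u) (hxp : x ≠ p) (hr : G.Reachable x p) :
    G.dist x u < G.dist x p := by
  obtain ⟨r, hrl⟩ := hr.exists_walk_length_eq_dist
  have hnil : ¬ r.Nil := Walk.not_nil_of_ne hxp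
  have hpen : r.penultimate = u :=
    (degree_eq_one_iff_existsUnique_adj.mp hp).unique (r.adj_penultimate hnil).symm hpu
  have hlen := r.length_dropLast_add_one hnil
  have : G.dist x u ≤ r.dropLast.length := hpen ▸ dist_le r.dropLast
  omega

lemma Walk.eq_or_eq_of_degree_eq_one {x y p : V} [Fintype (G.neighborSet p)] {w : G.Walk x y}
    (hw : w.length = G.dist x y) (hpw : p ∈ w.support) (hp : G.degree p = 1) :
    p = x ∨ p = y := by
  classical
  by_contra! hne
  obtain ⟨u, hpu, -⟩ := degree_eq_one_iff_existsUnique_adj.mp hp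
  have hxp : G.Reachable x p := (w.takeUntil p hpw).reachable
  have hyp : G.Reachable y p := (w.dropUntil p hpw).reachable.symm
  have hx := dist_lt_dist_of_degree_eq_one hp hpu hne.1.symm hxp
  have hy := dist_lt_dist_of_degree_eq_one hp hpu hne.2.symm hyp
  have hsplit := Walk.dist_add_dist_of_mem_support hw hpw
  have htri := (hxp.trans hpu.reachable).dist_triangle_left y
  rw [dist_comm (u := p), dist_comm (u := u)] at *
  omega

lemma Connected.dist_le_or_dist_le {u v : V} {a b : ℕ} (hG : G.Connected) (huv : G.Adj u v)
    (ha : ∀ (y : V) (q : G.Walk u y), (Walk.cons huv.symm q).IsPath → q.length ≤ a)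
    (hb : ∀ (y : V) (q : G.Walk v y), (Walk.cons huv q).IsPath → q.length ≤ b) (w : V) :
    G.dist u w ≤ a ∨ G.dist v w ≤ b := by
  have huv₁ : G.dist u v = 1 := dist_eq_one_iff_adj.mpr huv
  have hvu₁ : G.dist v u = 1 := dist_eq_one_iff_adj.mpr huv.symm
  obtain ⟨r, hr, hrl⟩ := hG.exists_path_of_dist u w
  by_cases hvr : v ∈ r.support
  · obtain ⟨s, hs, hsl⟩ := hG.exists_path_of_dist v w
    have hus : u ∉ s.support := fun hus => by
      have := Walk.dist_add_dist_of_mem_support hrl hvr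
      have := Walk.dist_add_dist_of_mem_support hsl hus
      omega
    exact Or.inr (hsl ▸ hb w s (hs.cons hus))
  · exact Or.inl (hrl ▸ ha w r (hr.cons hvr))

lemma IsAcyclic.length_eq_dist {u v : V} (hG : G.IsAcyclic) {p : G.Walk u v} (hp : p.IsPath) :
    p.length = G.dist u v := by
  obtain ⟨r, hr, hrl⟩ := p.reachable.exists_path_of_dist
  have hpr : (⟨p, hp⟩ : G.Path u v) = ⟨r, hr⟩ := (hG.subsingleton_path u v).elim _ _
  obtain rfl : p = r := congrArg Subtype.val hpr
  exact hrl

lemma IsAcyclic.isPath_append_cons {x y u v : V} (hG : G.IsAcyclic) (huv : G.Adj u v)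
    {p : G.Walk x u} {q : G.Walk v y} (hp : p.IsPath) (hq : q.IsPath)
    (hvp : v ∉ p.support) (huq : u ∉ q.support) : (p.append (Walk.cons huv q)).IsPath := by
  classical
  refine hp.append_of_disjoint (hq.cons huq) fun a hap haq => ?_
  rw [Walk.support_cons, List.tail_cons] at haq
  have hbridge := isBridge_iff_forall_walk_mem_edges.mp (isAcyclic_iff_forall_adj_isBridge.mp hG
    huv.symm) ((q.takeUntil a haq).append (p.dropUntil a hap))
  rw [Walk.edges_append, List.mem_append] at hbridge
  rcases hbridge with h | h
  · exact huq (q.snd_mem_support_of_mem_edges (q.edges_takeUntil_subset_edges haq h))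
  · exact hvp (p.fst_mem_support_of_mem_edges (p.edges_dropUntil_subset_edges hap h))

lemma IsAcyclic.exists_degree_eq_one_forall_length_le [Fintype V] [DecidableRel G.Adj]
    {u v : V} (hG : G.IsAcyclic) (hvu : G.Adj v u) :
    ∃ (x : V) (p : G.Walk u x), (Walk.cons hvu p).IsPath ∧ G.degree x = 1 ∧
      ∀ (y : V) (q : G.Walk u y), (Walk.cons hvu q).IsPath → q.length ≤ p.length := by
  set s := {n | ∃ (y : V) (q : G.Walk u y), (Walk.cons hvu q).IsPath ∧ q.length = n}
  have hne : s.Nonempty := ⟨0, u, Walk.nil, by simp [hvu.ne], rfl⟩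
  have hbdd : BddAbove s := ⟨Fintype.card V, by
    rintro _ ⟨y, q, hq, rfl⟩
    have := hq.length_lt
    rw [Walk.length_cons] at this
    omega⟩
  obtain ⟨x, p, hp, hpl⟩ := Nat.sSup_mem hne hbdd
  have hmax : ∀ (y : V) (q : G.Walk u y), (Walk.cons hvu q).IsPath → q.length ≤ p.length :=
    fun y q hq => hpl ▸ le_csSup hbdd ⟨y, q, hq, rfl⟩
  refine ⟨x, p, hp, degree_eq_one_iff_existsUnique_adj.mpr ⟨_, (Walk.adj_penultimate
    (p := Walk.cons hvu p) Walk.not_nil_cons).symm, fun z hz => ?_⟩, hmax⟩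
  by_contra hzP
  replace hzP : z ∉ (Walk.cons hvu p).support :=
    fun h => hzP (hG.eq_penultimate_of_adj_end hp hz h)
  have := hmax z (p.concat hz) (hp.concat hzP hz)
  rw [Walk.length_concat] at this
  omega

end SimpleGraph

theorem dist_le_eccent {V : Type*} [Fintype V] (G : SimpleGraph V) (v w : V) :
    G.dist v w ≤ _root_.eccent G v :=
  Finset.le_sup (Finset.mem_univ w)

theorem SimpleGraph.Connected.eccent_le_of_dist_le_or_dist_le {V : Type*} [Fintype V]
    {G : SimpleGraph V} {u v x : V} {a b : ℕ} (hG : G.Connected) (huv : G.Adj u v)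
    (hxu : G.dist x u ≤ a) (hab : a ≤ b) (h : ∀ w, G.dist u w ≤ a ∨ G.dist v w ≤ b) :
    _root_.eccent G x ≤ a + 1 + b := by
  refine Finset.sup_le fun w _ => ?_
  have hxw := hG.dist_triangle (u := x) (v := u) (w := w)
  have huw := hG.dist_triangle (u := u) (v := v) (w := w)
  rw [dist_eq_one_iff_adj.mpr huv] at huw
  rcases h w with hw | hw <;> omega

theorem SimpleGraph.IsTree.exists_isKGeodesic_mem_edges {V : Type*} [Fintype V]
    {G : SimpleGraph V} [DecidableRel G.Adj] {u v : V} {k : ℕ} (hT : G.IsTree)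
    (huv : G.Adj u v) (hk : 1 ≤ k) (hleaf : ∀ x, G.degree x = 1 → k ≤ _root_.eccent G x) :
    ∃ (x y : V) (w : G.Walk x y), IsKGeodesic G k w ∧ s(u, v) ∈ w.edges := by
  obtain ⟨X, p, hp, hX, hpmax⟩ := hT.isAcyclic.exists_degree_eq_one_forall_length_le huv.symm
  obtain ⟨Y, q, hq, hY, hqmax⟩ := hT.isAcyclic.exists_degree_eq_one_forall_length_le huv
  have hside := hT.connected.dist_le_or_dist_le huv hpmax hqmax
  have hk_le : k ≤ p.length + 1 + q.length := by
    rcases le_total p.length q.length with h | h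
    · exact (hleaf X hX).trans <|
        hT.connected.eccent_le_of_dist_le_or_dist_le huv (dist_comm ▸ dist_le p) h hside
    · have := (hleaf Y hY).trans <| hT.connected.eccent_le_of_dist_le_or_dist_le huv.symm
        (dist_comm ▸ dist_le q) h fun w => (hside w).symm
      omega
  rw [Walk.cons_isPath_iff] at hp hq
  have hW := hT.isAcyclic.isPath_append_cons huv hp.1.reverse hq.1 (by simpa using hp.2) hq.2
  refine exists_isKGeodesic_mem_edges_of_le hk _ (hT.isAcyclic.length_eq_dist hW) ?_ (by simp)
  simp only [Walk.length_append, Walk.length_reverse, Walk.length_cons]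
  omega

theorem tree_maxEdgeGeodetic_general {V : Type*} [Fintype V]
    (G : SimpleGraph V) [DecidableRel G.Adj]
    (hT : G.IsTree) (hE : G.edgeSet.Nonempty) :
    IsMaxEdgeGeodetic G (sInf {d : ℕ | ∃ v : V, G.degree v = 1 ∧ _root_.eccent G v = d}) := by
  set k := sInf {d : ℕ | ∃ v : V, G.degree v = 1 ∧ _root_.eccent G v = d}
  have hleaf : ∀ x, G.degree x = 1 → k ≤ _root_.eccent G x :=
    fun x hx => Nat.sInf_le ⟨x, hx, rfl⟩
  obtain ⟨e, he⟩ := hE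
  have : Nontrivial V := by
    induction e using Sym2.ind with | _ a b => exact nontrivial_of_ne a b (G.ne_of_adj he)
  obtain ⟨x₀, hx₀⟩ := hT.exists_vert_degree_one_of_nontrivial
  obtain ⟨p, hp, hpk⟩ : k ∈ {d : ℕ | ∃ v : V, G.degree v = 1 ∧ _root_.eccent G v = d} :=
    Nat.sInf_mem ⟨_, x₀, hx₀, rfl⟩
  obtain ⟨u, hpu, -⟩ := degree_eq_one_iff_existsUnique_adj.mp hp
  have hk : 1 ≤ k := hpk ▸ (dist_eq_one_iff_adj.mpr hpu).symm.trans_le (dist_le_eccent G p u)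
  refine ⟨fun e he => ?_, fun h => ?_⟩
  · induction e using Sym2.ind with | _ a b => exact hT.exists_isKGeodesic_mem_edges he hk hleaf
  · obtain ⟨x, y, w, ⟨hwl, hwd⟩, hw⟩ := h s(p, u) hpu
    rcases w.eq_or_eq_of_degree_eq_one (hwl.trans hwd.symm) (w.fst_mem_support_of_mem_edges hw)
      hp with rfl | rfl
    · have := dist_le_eccent G p y
      omega
    · have := dist_le_eccent G p x
      rw [dist_comm] at hwd
      omega

/-- A tree `T` with at least one edge is `[k]`-edge geodetic, where `k` is the minimum
eccentricity over the pendant (degree-one) vertices of `T`. -/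
theorem tree_maxEdgeGeodetic {V : Type*} [Fintype V] [DecidableEq V]
    (G : SimpleGraph V) [DecidableRel G.Adj]
    (hT : G.IsTree) (hE : G.edgeSet.Nonempty) :
    IsMaxEdgeGeodetic G (sInf {d : ℕ | ∃ v : V, G.degree v = 1 ∧ _root_.eccent G v = d}) :=
  tree_maxEdgeGeodetic_general G hT hE
end

section
/- Let G be a finite connected graph that is [p]-edge geodetic and H a finite connected graph that is [q]-edge geodetic. Then the strong product G ⊠ H is [k]-edge geodetic where k = min{p, q}: every edge of G ⊠ H lies on a geodesic of length min{p,q}, and some edge of G ⊠ H lies on no geodesic of length min{p,q}+1. -/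
open SimpleGraph

/-- The strong product of two simple graphs. -/
def strongProd {α β : Type*} (G : SimpleGraph α) (H : SimpleGraph β) :
    SimpleGraph (α × β) where
  Adj x y := (x.1 = y.1 ∧ H.Adj x.2 y.2) ∨ (x.2 = y.2 ∧ G.Adj x.1 y.1) ∨
    (G.Adj x.1 y.1 ∧ H.Adj x.2 y.2)
  symm := by
    constructor
    rintro ⟨a₁, b₁⟩ ⟨a₂, b₂⟩ (⟨h, h'⟩ | ⟨h, h'⟩ | ⟨h, h'⟩)
    · exact Or.inl ⟨h.symm, h'.symm⟩
    · exact Or.inr (Or.inl ⟨h.symm, h'.symm⟩)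
    · exact Or.inr (Or.inr ⟨h.symm, h'.symm⟩)
  loopless := by
    constructor
    rintro ⟨a, b⟩ (⟨_, h⟩ | ⟨_, h⟩ | ⟨h, _⟩) <;> exact h.ne rfl

/-!
Subwalks of geodesics are geodesics, so for `k ≥ 1` a `(k + 1)`-edge geodetic graph is also
`k`-edge geodetic, and both factors are `min p q`-edge geodetic. An edge `xy` of `G ⊠ H` with
`x.1 ≠ y.1` lies on a `G`-geodesic through `x.1 y.1`; lifting its two halves into the fibres
through `x` and `y` gives a walk of the same length through `xy`, which is geodesic because
projecting to `G` does not increase distances (symmetrically when `x.2 ≠ y.2`).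

Conversely, let a `(k + 1)`-geodesic of `G ⊠ H` pass through `(a, c)(b, c)`. Its projection to `H`
loses that step, so the `H`-distance of its ends is at most `k`; as the distance in `G ⊠ H` is at
most the maximum of the distances in the factors, the projection to `G` is a `(k + 1)`-geodesic
through `ab`. Hence `G ⊠ H` is `(k + 1)`-edge geodetic only if both factors are.
-/

lemma List.mem_tail_or_mem_dropLast {α : Type*} {l : List α} {x : α} (hl : 2 ≤ l.length)
    (hx : x ∈ l) : x ∈ l.tail ∨ x ∈ l.dropLast := by
  obtain ⟨a, b, t, rfl⟩ : ∃ a b t, l = a :: b :: t := by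
    match l, hl with
    | a :: b :: t, _ => exact ⟨a, b, t, rfl⟩
  rcases List.mem_cons.1 hx with rfl | hx
  · exact .inr (by simp)
  · exact .inl hx

namespace SimpleGraph

variable {V W : Type*} {Γ : SimpleGraph V} {Δ : SimpleGraph W} {u v : V}

namespace Walk

lemma exists_split_of_mem_edges {a b : V} (w : Γ.Walk u v) (he : s(a, b) ∈ w.edges) :
    (∃ (w₁ : Γ.Walk u a) (w₂ : Γ.Walk b v), w₁.length + 1 + w₂.length = w.length) ∨
      ∃ (w₁ : Γ.Walk u b) (w₂ : Γ.Walk a v), w₁.length + 1 + w₂.length = w.length := by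
  induction w with
  | nil => simp at he
  | @cons u z v h w ih =>
    rw [edges_cons, List.mem_cons, Sym2.eq_iff] at he
    rcases he with (⟨rfl, rfl⟩ | ⟨rfl, rfl⟩) | he
    · exact .inl ⟨nil, w, by simp; omega⟩
    · exact .inr ⟨nil, w, by simp; omega⟩
    · rcases ih he with ⟨w₁, w₂, hlen⟩ | ⟨w₁, w₂, hlen⟩
      · exact .inl ⟨cons h w₁, w₂, by simp; omega⟩
      · exact .inr ⟨cons h w₁, w₂, by simp; omega⟩

section Squash

variable (f : V → W) (hf : ∀ ⦃x y⦄, Γ.Adj x y → f x ≠ f y → Δ.Adj (f x) (f y))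

open Classical in
noncomputable def squash : ∀ {u v : V}, Γ.Walk u v → Δ.Walk (f u) (f v)
  | _, _, nil => nil
  | u, _, cons (v := z) h w =>
    if hz : f u = f z then (squash w).copy hz.symm rfl else cons (hf h hz) (squash w)

variable {f}

lemma length_squash_le (w : Γ.Walk u v) : (w.squash f hf).length ≤ w.length := by
  induction w with
  | nil => simp [squash]
  | @cons u z v h w ih => by_cases hz : f u = f z <;> simp [squash, hz] <;> omega

lemma length_squash_lt {x y : V} (w : Γ.Walk u v) (he : s(x, y) ∈ w.edges) (hxy : f x = f y) :
    (w.squash f hf).length < w.length := by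
  induction w with
  | nil => simp at he
  | @cons u z v h w ih =>
    have := length_squash_le hf w
    rw [edges_cons, List.mem_cons, Sym2.eq_iff] at he
    rcases he with (⟨rfl, rfl⟩ | ⟨rfl, rfl⟩) | he
    · simp [squash, hxy]; omega
    · simp [squash, hxy]; omega
    · have := ih he
      by_cases hz : f u = f z <;> simp [squash, hz] <;> omega

lemma mem_edges_squash {x y : V} (w : Γ.Walk u v) (he : s(x, y) ∈ w.edges) (hxy : f x ≠ f y) :
    s(f x, f y) ∈ (w.squash f hf).edges := by
  induction w with
  | nil => simp at he
  | @cons u z v h w ih =>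
    rw [edges_cons, List.mem_cons, Sym2.eq_iff] at he
    rcases he with (⟨rfl, rfl⟩ | ⟨rfl, rfl⟩) | he
    · simp [squash, hxy]
    · simp [squash, Ne.symm hxy, Sym2.eq_swap]
    · by_cases hz : f u = f z <;> simp [squash, hz, ih he]

end Squash

end Walk

lemma Reachable.dist_map_le {f : V → W}
    (hf : ∀ ⦃x y⦄, Γ.Adj x y → f x ≠ f y → Δ.Adj (f x) (f y))
    (hr : Γ.Reachable u v) : Δ.dist (f u) (f v) ≤ Γ.dist u v := by
  obtain ⟨w, hw⟩ := hr.exists_walk_length_eq_dist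
  exact hw ▸ (dist_le _).trans (w.length_squash_le hf)

end SimpleGraph

section Geodesic

variable {V : Type*} {Γ : SimpleGraph V} {u v : V} {j k : ℕ}

lemma IsKGeodesic.of_le_dist {w : Γ.Walk u v} (hw : w.length = k) (hk : k ≤ Γ.dist u v) :
    IsKGeodesic Γ k w :=
  ⟨hw, le_antisymm (hw ▸ dist_le w) hk⟩

lemma IsKGeodesic.of_isSubwalk {u' v' : V} {w : Γ.Walk u v} {w' : Γ.Walk u' v'}
    (hw : IsKGeodesic Γ k w) (hsub : w'.IsSubwalk w) (hlen : w'.length = j) :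
    IsKGeodesic Γ j w' :=
  ⟨hlen, hlen ▸ (length_eq_dist_of_subwalk (hw.1.trans hw.2.symm) hsub).symm⟩

lemma IsEdgeGeodetic.exists_split (h : IsEdgeGeodetic Γ k) {a b : V} (hab : Γ.Adj a b) :
    ∃ (u v : V) (w₁ : Γ.Walk u a) (w₂ : Γ.Walk b v),
      w₁.length + 1 + w₂.length = k ∧ Γ.dist u v = k := by
  obtain ⟨u, v, w, ⟨hlen, hdist⟩, hw⟩ := h s(a, b) hab
  rcases w.exists_split_of_mem_edges hw with ⟨w₁, w₂, hsplit⟩ | ⟨w₁, w₂, hsplit⟩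
  · exact ⟨u, v, w₁, w₂, hsplit.trans hlen, hdist⟩
  · refine ⟨v, u, w₂.reverse, w₁.reverse, ?_, dist_comm.trans hdist⟩
    simp only [Walk.length_reverse]
    omega

lemma IsEdgeGeodetic.of_succ (hk : 1 ≤ k) (h : IsEdgeGeodetic Γ (k + 1)) :
    IsEdgeGeodetic Γ k := by
  intro e he
  obtain ⟨u, v, w, hw, hew⟩ := h e he
  have hlen : 2 ≤ w.edges.length := by rw [Walk.length_edges, hw.1]; omega
  rcases List.mem_tail_or_mem_dropLast hlen hew with hmem | hmem
  · exact ⟨_, _, w.tail, hw.of_isSubwalk (Walk.isSubwalk_rfl w).tail (by simp [hw.1]),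
      by simpa using hmem⟩
  · exact ⟨_, _, w.dropLast, hw.of_isSubwalk (Walk.isSubwalk_rfl w).dropLast
      (by simp [Walk.length_dropLast, hw.1]), by simpa using hmem⟩

lemma IsEdgeGeodetic.of_le {m : ℕ} (h : IsEdgeGeodetic Γ m) (hj : 1 ≤ j) (hjm : j ≤ m) :
    IsEdgeGeodetic Γ j := by
  induction m, hjm using Nat.le_induction with
  | base => exact h
  | succ m hjm ih => exact ih (h.of_succ (hj.trans hjm))

lemma IsMaxEdgeGeodetic.exists_adj (h : IsMaxEdgeGeodetic Γ k) : ∃ a b, Γ.Adj a b := by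
  by_contra! hno
  exact h.2 fun e he => by
    induction e using Sym2.ind with
    | _ a b => exact absurd he (hno a b)

lemma IsMaxEdgeGeodetic.one_le (h : IsMaxEdgeGeodetic Γ k) : 1 ≤ k := by
  obtain ⟨a, b, hab⟩ := h.exists_adj
  obtain ⟨u, v, w, hw, hew⟩ := h.1 s(a, b) hab
  rw [← hw.1, ← Walk.length_edges]
  exact List.length_pos_of_mem hew

end Geodesic

namespace strongProd

variable {α β : Type*} {G : SimpleGraph α} {H : SimpleGraph β} {x y : α × β} {k : ℕ}

lemma adj_fst_of_ne ⦃x y : α × β⦄ (h : (strongProd G H).Adj x y) (hne : x.1 ≠ y.1) :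
    G.Adj x.1 y.1 := by
  rcases h with ⟨heq, _⟩ | ⟨_, h⟩ | ⟨h, _⟩
  exacts [absurd heq hne, h, h]

lemma adj_snd_of_ne ⦃x y : α × β⦄ (h : (strongProd G H).Adj x y) (hne : x.2 ≠ y.2) :
    H.Adj x.2 y.2 := by
  rcases h with ⟨_, h⟩ | ⟨heq, _⟩ | ⟨_, h⟩
  exacts [h, absurd heq hne, h]

lemma adj_left {a₁ a₂ : α} (h : G.Adj a₁ a₂) (b : β) :
    (strongProd G H).Adj (a₁, b) (a₂, b) :=
  .inr (.inl ⟨rfl, h⟩)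

lemma adj_right (a : α) {b₁ b₂ : β} (h : H.Adj b₁ b₂) :
    (strongProd G H).Adj (a, b₁) (a, b₂) :=
  .inl ⟨rfl, h⟩

lemma adj_diag {a₁ a₂ : α} {b₁ b₂ : β} (hG : G.Adj a₁ a₂) (hH : H.Adj b₁ b₂) :
    (strongProd G H).Adj (a₁, b₁) (a₂, b₂) :=
  .inr (.inr ⟨hG, hH⟩)

@[simps]
def inclLeft (G : SimpleGraph α) (H : SimpleGraph β) (b : β) : G →g strongProd G H where
  toFun a := (a, b)
  map_rel' h := adj_left h b

@[simps]
def inclRight (G : SimpleGraph α) (H : SimpleGraph β) (a : α) : H →g strongProd G H where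
  toFun b := (a, b)
  map_rel' h := adj_right a h

lemma dist_fst_le (h : (strongProd G H).Reachable x y) :
    G.dist x.1 y.1 ≤ (strongProd G H).dist x y :=
  h.dist_map_le adj_fst_of_ne

lemma dist_snd_le (h : (strongProd G H).Reachable x y) :
    H.dist x.2 y.2 ≤ (strongProd G H).dist x y :=
  h.dist_map_le adj_snd_of_ne

lemma exists_walk_length_eq_max {a c : α} (P : G.Walk a c) :
    ∀ {b d : β} (Q : H.Walk b d),
      ∃ W : (strongProd G H).Walk (a, b) (c, d), W.length = max P.length Q.length := by
  induction P with
  | nil => exact fun Q => ⟨Q.map (inclRight G H _), (Q.length_map _).trans (by simp)⟩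
  | @cons a a' c hP P ih =>
    intro b d Q
    cases Q with
    | nil => exact ⟨(P.cons hP).map (inclLeft G H _), (Walk.length_map _ _).trans (by simp)⟩
    | cons hQ Q =>
      obtain ⟨W, hW⟩ := ih Q
      exact ⟨W.cons (adj_diag hP hQ), by simp [hW]⟩

lemma dist_le_max (hG : G.Reachable x.1 y.1) (hH : H.Reachable x.2 y.2) :
    (strongProd G H).dist x y ≤ max (G.dist x.1 y.1) (H.dist x.2 y.2) := by
  obtain ⟨P, hP⟩ := hG.exists_walk_length_eq_dist
  obtain ⟨Q, hQ⟩ := hH.exists_walk_length_eq_dist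
  obtain ⟨W, hW⟩ := exists_walk_length_eq_max P Q
  exact hP ▸ hQ ▸ hW ▸ dist_le W

lemma exists_isKGeodesic_of_fst_ne (hG : IsEdgeGeodetic G k) (hxy : (strongProd G H).Adj x y)
    (hne : x.1 ≠ y.1) : ∃ (u v : α × β) (w : (strongProd G H).Walk u v),
      IsKGeodesic (strongProd G H) k w ∧ s(x, y) ∈ w.edges := by
  obtain ⟨u, v, w₁, w₂, hlen, hdist⟩ := hG.exists_split (adj_fst_of_ne hxy hne)
  have hxy' : (strongProd G H).Adj (inclLeft G H x.2 x.1) (inclLeft G H y.2 y.1) := hxy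
  let w := (w₁.map (inclLeft G H x.2)).append ((w₂.map (inclLeft G H y.2)).cons hxy')
  refine ⟨_, _, w, IsKGeodesic.of_le_dist ?_ ?_, by simp [w]⟩
  · simp only [w, Walk.length_append, Walk.length_cons, Walk.length_map]
    omega
  exact hdist ▸ dist_fst_le w.reachable

lemma exists_isKGeodesic_of_snd_ne (hH : IsEdgeGeodetic H k) (hxy : (strongProd G H).Adj x y)
    (hne : x.2 ≠ y.2) : ∃ (u v : α × β) (w : (strongProd G H).Walk u v),
      IsKGeodesic (strongProd G H) k w ∧ s(x, y) ∈ w.edges := by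
  obtain ⟨u, v, w₁, w₂, hlen, hdist⟩ := hH.exists_split (adj_snd_of_ne hxy hne)
  have hxy' : (strongProd G H).Adj (inclRight G H x.1 x.2) (inclRight G H y.1 y.2) := hxy
  let w := (w₁.map (inclRight G H x.1)).append ((w₂.map (inclRight G H y.1)).cons hxy')
  refine ⟨_, _, w, IsKGeodesic.of_le_dist ?_ ?_, by simp [w]⟩
  · simp only [w, Walk.length_append, Walk.length_cons, Walk.length_map]
    omega
  exact hdist ▸ dist_snd_le w.reachable

end strongProd

section StrongProd

variable {α β : Type*} {G : SimpleGraph α} {H : SimpleGraph β} {k : ℕ}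

theorem isEdgeGeodetic_strongProd (hG : IsEdgeGeodetic G k) (hH : IsEdgeGeodetic H k) :
    IsEdgeGeodetic (strongProd G H) k := by
  intro e he
  induction e using Sym2.ind with | _ x y => ?_
  by_cases hfst : x.1 = y.1
  · have hsnd : x.2 ≠ y.2 := fun hsnd => (strongProd G H).ne_of_adj he (Prod.ext hfst hsnd)
    exact strongProd.exists_isKGeodesic_of_snd_ne hH he hsnd
  · exact strongProd.exists_isKGeodesic_of_fst_ne hG he hfst

theorem IsEdgeGeodetic.of_strongProd_left [Nonempty β] (h : IsEdgeGeodetic (strongProd G H) k) :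
    IsEdgeGeodetic G k := by
  intro e he
  induction e using Sym2.ind with | _ a b => ?_
  obtain ⟨c⟩ := ‹Nonempty β›
  obtain ⟨u, v, w, hw, hew⟩ := h s((a, c), (b, c)) (strongProd.adj_left he c)
  let wG := w.squash Prod.fst strongProd.adj_fst_of_ne
  let wH := w.squash Prod.snd strongProd.adj_snd_of_ne
  have hH : H.dist u.2 v.2 < k := (dist_le wH).trans_lt (hw.1 ▸ w.length_squash_lt _ hew rfl)
  have hk : k ≤ max (G.dist u.1 v.1) (H.dist u.2 v.2) :=
    hw.2 ▸ strongProd.dist_le_max wG.reachable wH.reachable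
  have hG : k ≤ G.dist u.1 v.1 := by omega
  refine ⟨u.1, v.1, wG, IsKGeodesic.of_le_dist ?_ hG, w.mem_edges_squash _ hew he.ne⟩
  exact le_antisymm (hw.1 ▸ w.length_squash_le _) (hG.trans (dist_le wG))

theorem IsEdgeGeodetic.of_strongProd_right [Nonempty α] (h : IsEdgeGeodetic (strongProd G H) k) :
    IsEdgeGeodetic H k := by
  intro e he
  induction e using Sym2.ind with | _ a b => ?_
  obtain ⟨c⟩ := ‹Nonempty α›
  obtain ⟨u, v, w, hw, hew⟩ := h s((c, a), (c, b)) (strongProd.adj_right c he)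
  let wG := w.squash Prod.fst strongProd.adj_fst_of_ne
  let wH := w.squash Prod.snd strongProd.adj_snd_of_ne
  have hG : G.dist u.1 v.1 < k := (dist_le wG).trans_lt (hw.1 ▸ w.length_squash_lt _ hew rfl)
  have hk : k ≤ max (G.dist u.1 v.1) (H.dist u.2 v.2) :=
    hw.2 ▸ strongProd.dist_le_max wG.reachable wH.reachable
  have hH : k ≤ H.dist u.2 v.2 := by omega
  refine ⟨u.2, v.2, wH, IsKGeodesic.of_le_dist ?_ hH, w.mem_edges_squash _ hew he.ne⟩
  exact le_antisymm (hw.1 ▸ w.length_squash_le _) (hH.trans (dist_le wH))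

end StrongProd

theorem strongProd_maxEdgeGeodetic_general {α β : Type*}
    (G : SimpleGraph α) (H : SimpleGraph β)
    (p q : ℕ) (hG : IsMaxEdgeGeodetic G p) (hH : IsMaxEdgeGeodetic H q) :
    IsMaxEdgeGeodetic (strongProd G H) (min p q) := by
  have hk : 1 ≤ min p q := le_min hG.one_le hH.one_le
  refine ⟨isEdgeGeodetic_strongProd (hG.1.of_le hk (min_le_left p q))
    (hH.1.of_le hk (min_le_right p q)), fun h => ?_⟩
  obtain ⟨a, -⟩ := hG.exists_adj
  obtain ⟨b, -⟩ := hH.exists_adj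
  have : Nonempty α := ⟨a⟩
  have : Nonempty β := ⟨b⟩
  rcases min_choice p q with hmin | hmin <;> rw [hmin] at h
  · exact hG.2 h.of_strongProd_left
  · exact hH.2 h.of_strongProd_right

/-- If `G` is a finite connected `[p]`-edge geodetic graph and `H` is a finite connected
`[q]`-edge geodetic graph, then the strong product `G ⊠ H` is `[min p q]`-edge geodetic. -/
theorem strongProd_maxEdgeGeodetic {α β : Type*} [Fintype α] [Fintype β]
    (G : SimpleGraph α) (H : SimpleGraph β) (hGc : G.Connected) (hHc : H.Connected)
    (p q : ℕ) (hG : IsMaxEdgeGeodetic G p) (hH : IsMaxEdgeGeodetic H q) :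
    IsMaxEdgeGeodetic (strongProd G H) (min p q) :=
  strongProd_maxEdgeGeodetic_general G H p q hG hH
end
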